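/- arXiv:0912.3694 — 4 statements merged into one kernel-verified Lean document; each statement's English description precedes it below -/
import Mathlib

section
/- Let H be a real Hilbert space, A : H → H a continuous self-adjoint nonnegative linear operator, and v : [0,∞) → H continuously differentiable with v'(t) = -A v(t) for all t ≥ 0. Then for every t > 0, |A^{1/2} v(t)|² ≤ |v(0)|² / (2t). -/
/-!
Along the flow `v' = -A v` the energy `E(t) = ⟪A v(t), v(t)⟫` has derivative `-2‖A v(t)‖² ≤ 0`,
so it is nonincreasing, while `‖v(t)‖²` has derivative `-2 E(t)`. By the mean value theorem on
`[0, t]`, `‖v(t)‖² - ‖v(0)‖² ≤ -2 t E(t)`, hence `2 t E(t) ≤ ‖v(0)‖²`.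
-/

open scoped RealInnerProductSpace

open Set

section

variable {H : Type*} [NormedAddCommGroup H] [InnerProductSpace ℝ H] {A : H →L[ℝ] H} {v : ℝ → H}
  {t : ℝ}

theorem hasDerivAt_norm_sq_of_hasDerivAt_neg_apply (hv : HasDerivAt v (-A (v t)) t) :
    HasDerivAt (‖v ·‖ ^ 2) (-(2 * ⟪A (v t), v t⟫)) t := by
  convert hv.norm_sq using 1
  rw [inner_neg_right, real_inner_comm, mul_neg]

theorem hasDerivAt_inner_apply_self_of_hasDerivAt_neg_apply (hA : (A : H →ₗ[ℝ] H).IsSymmetric)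
    (hv : HasDerivAt v (-A (v t)) t) :
    HasDerivAt (fun s ↦ ⟪A (v s), v s⟫) (-(2 * ‖A (v t)‖ ^ 2)) t := by
  have hAv : HasDerivAt (fun s ↦ A (v s)) (A (-A (v t))) t := A.hasFDerivAt.comp_hasDerivAt t hv
  refine (hAv.inner ℝ hv).congr_deriv ?_
  have hsymm : ⟪A (A (v t)), v t⟫ = ⟪A (v t), A (v t)⟫ := hA _ _
  rw [map_neg, inner_neg_left, inner_neg_right, hsymm, real_inner_self_eq_norm_sq]
  ring

theorem antitoneOn_inner_apply_self_of_hasDerivAt_neg_apply (hA : (A : H →ₗ[ℝ] H).IsSymmetric)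
    (hv : ∀ t ≥ (0 : ℝ), HasDerivAt v (-A (v t)) t) :
    AntitoneOn (fun t ↦ ⟪A (v t), v t⟫) (Ici 0) := by
  have hE t (ht : 0 ≤ t) := hasDerivAt_inner_apply_self_of_hasDerivAt_neg_apply hA (hv t ht)
  refine antitoneOn_of_hasDerivWithinAt_nonpos (f' := fun t ↦ -(2 * ‖A (v t)‖ ^ 2)) (convex_Ici 0)
    (fun t ht ↦ (hE t ht).continuousAt.continuousWithinAt) (fun t ht ↦ ?_) (fun t _ ↦ ?_)
  · rw [interior_Ici] at ht
    exact (hE t ht.le).hasDerivWithinAt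
  · have := sq_nonneg ‖A (v t)‖
    linarith

end

theorem stmt_5_general {H : Type*} [NormedAddCommGroup H] [InnerProductSpace ℝ H]
    (A : H →L[ℝ] H)
    (hA_sa : ∀ x y : H, ⟪A x, y⟫ = ⟪x, A y⟫)
    (v : ℝ → H)
    (hv : ∀ t ≥ (0:ℝ), HasDerivAt v (-(A (v t))) t) :
    ∀ t > (0:ℝ), ⟪A (v t), v t⟫ ≤ ‖v 0‖ ^ 2 / (2 * t) := by
  intro T hT
  have hN s (hs : 0 ≤ s) := hasDerivAt_norm_sq_of_hasDerivAt_neg_apply (hv s hs)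
  have hE := antitoneOn_inner_apply_self_of_hasDerivAt_neg_apply hA_sa hv
  have hmvt : ‖v T‖ ^ 2 - ‖v 0‖ ^ 2 ≤ -(2 * ⟪A (v T), v T⟫) * (T - 0) := by
    refine (convex_Icc 0 T).image_sub_le_mul_sub_of_deriv_le
      (fun s hs ↦ (hN s hs.1).continuousAt.continuousWithinAt)
      (fun s hs ↦ ?_) (fun s hs ↦ ?_) 0 (left_mem_Icc.2 hT.le) T (right_mem_Icc.2 hT.le) hT.le
    all_goals rw [interior_Icc] at hs
    · exact (hN s hs.1.le).differentiableAt.differentiableWithinAt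
    · rw [(hN s hs.1.le).deriv, neg_le_neg_iff]
      exact mul_le_mul_of_nonneg_left (hE hs.1.le hT.le hs.2.le) zero_le_two
  rw [le_div_iff₀ (by positivity)]
  linarith [sq_nonneg ‖v T‖]

theorem stmt_5 {H : Type*} [NormedAddCommGroup H] [InnerProductSpace ℝ H] [CompleteSpace H]
    (A : H →L[ℝ] H)
    (hA_sa : ∀ x y : H, ⟪A x, y⟫ = ⟪x, A y⟫)
    (hA_nn : ∀ x : H, 0 ≤ ⟪A x, x⟫)
    (v : ℝ → H)
    (hv : ∀ t ≥ (0:ℝ), HasDerivAt v (-(A (v t))) t) :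
    ∀ t > (0:ℝ), ⟪A (v t), v t⟫ ≤ ‖v 0‖ ^ 2 / (2 * t) :=
  stmt_5_general A hA_sa v hv
end

section
/- Let H be a real Hilbert space, A : H → H a continuous self-adjoint nonnegative linear operator, and v : [0,∞) → H continuously differentiable with v'(t) = -A v(t) for all t ≥ 0. Then for every t > 0, |A v(t)|² ≤ |v(0)|² / (2t²). -/
/-!
Along a solution of `v' = -A v` the Lyapunov functional
`E(s) = s² ‖A v(s)‖² + s ⟪A v(s), v(s)⟫ + ‖v(s)‖² / 2`
has derivative `-2 s² ⟪A v(s), A (A v(s))⟫ ≤ 0`: the three energy identities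
`(‖v‖²)' = -2 ⟪v, A v⟫`, `(⟪A v, v⟫)' = -2 ‖A v‖²` and `(‖A v‖²)' = -2 ⟪A v, A (A v)⟫`
telescope. Hence `t² ‖A v(t)‖² ≤ E(t) ≤ E(0) = ‖v(0)‖² / 2`.
-/

open scoped RealInnerProductSpace

theorem LinearMap.IsSymmetric.hasDerivAt_inner_apply_self {H : Type*} [NormedAddCommGroup H]
    [InnerProductSpace ℝ H] {A : H →L[ℝ] H} (hA : (A : H →ₗ[ℝ] H).IsSymmetric)
    {v : ℝ → H} {v' : H} {s : ℝ} (hv : HasDerivAt v v' s) :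
    HasDerivAt (fun u => ⟪A (v u), v u⟫) (2 * ⟪A (v s), v'⟫) s :=
  ((A.hasFDerivAt.comp_hasDerivAt s hv).inner ℝ hv).congr_deriv <| by
    have hsymm : ⟪A v', v s⟫ = ⟪v', A (v s)⟫ := hA v' (v s)
    rw [Function.comp_apply, hsymm, real_inner_comm v', two_mul]

section HeatEquation

variable {H : Type*} [NormedAddCommGroup H] [InnerProductSpace ℝ H] (A : H →L[ℝ] H) (v : ℝ → H)

noncomputable def heatLyapunov (s : ℝ) : ℝ :=
  s ^ 2 * ‖A (v s)‖ ^ 2 + s * ⟪A (v s), v s⟫ + ‖v s‖ ^ 2 / 2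

variable {A v}

theorem hasDerivAt_heatLyapunov (hA : (A : H →ₗ[ℝ] H).IsSymmetric) {s : ℝ}
    (hv : HasDerivAt v (-A (v s)) s) :
    HasDerivAt (heatLyapunov A v) (-2 * s ^ 2 * ⟪A (v s), A (A (v s))⟫) s := by
  have hAv := (hasDerivAt_pow 2 s).mul (A.hasFDerivAt.comp_hasDerivAt s hv).norm_sq
  have hAvv := (hasDerivAt_id s).mul (hA.hasDerivAt_inner_apply_self hv)
  have hvv := hv.norm_sq.div_const 2
  refine ((hAv.add hAvv).add hvv).congr_deriv ?_
  simp only [Function.comp_apply, map_neg, inner_neg_right, id_eq, real_inner_self_eq_norm_sq,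
    real_inner_comm (v s)]
  ring

theorem antitoneOn_heatLyapunov (hA : A.IsPositive)
    (hv : ∀ t ≥ (0 : ℝ), HasDerivAt v (-A (v t)) t) :
    AntitoneOn (heatLyapunov A v) (Set.Ici 0) := by
  have hderiv (s : ℝ) (hs : 0 ≤ s) := hasDerivAt_heatLyapunov hA.isSymmetric (hv s hs)
  refine antitoneOn_of_hasDerivWithinAt_nonpos (convex_Ici 0)
    (fun s hs => (hderiv s hs).continuousAt.continuousWithinAt)
    (fun s hs => (hderiv s (interior_subset hs)).hasDerivWithinAt) fun s _ => ?_
  nlinarith [hA.inner_nonneg_right (A (v s)), sq_nonneg s]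

theorem sq_mul_norm_sq_le_heatLyapunov (hA : A.IsPositive) {t : ℝ} (ht : 0 ≤ t) :
    t ^ 2 * ‖A (v t)‖ ^ 2 ≤ heatLyapunov A v t := by
  unfold heatLyapunov
  nlinarith [mul_nonneg ht (hA.inner_nonneg_left (v t)), sq_nonneg ‖v t‖]

theorem sq_mul_norm_sq_apply_le (hA : A.IsPositive)
    (hv : ∀ t ≥ (0 : ℝ), HasDerivAt v (-A (v t)) t) {t : ℝ} (ht : 0 ≤ t) :
    t ^ 2 * ‖A (v t)‖ ^ 2 ≤ ‖v 0‖ ^ 2 / 2 := calc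
  t ^ 2 * ‖A (v t)‖ ^ 2 ≤ heatLyapunov A v t := sq_mul_norm_sq_le_heatLyapunov hA ht
  _ ≤ heatLyapunov A v 0 := antitoneOn_heatLyapunov hA hv Set.self_mem_Ici ht ht
  _ = ‖v 0‖ ^ 2 / 2 := by simp [heatLyapunov]

end HeatEquation

theorem stmt_6_general {H : Type*} [NormedAddCommGroup H] [InnerProductSpace ℝ H]
    (A : H →L[ℝ] H)
    (hA_sa : ∀ x y : H, ⟪A x, y⟫ = ⟪x, A y⟫)
    (hA_nn : ∀ x : H, 0 ≤ ⟪A x, x⟫)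
    (v : ℝ → H)
    (hv : ∀ t ≥ (0:ℝ), HasDerivAt v (-(A (v t))) t) :
    ∀ t > (0:ℝ), ‖A (v t)‖ ^ 2 ≤ ‖v 0‖ ^ 2 / (2 * t ^ 2) := by
  intro t ht
  have hA : A.IsPositive := (A.isPositive_iff).2 ⟨hA_sa, hA_nn⟩
  rw [le_div_iff₀ (by positivity)]
  linarith [sq_mul_norm_sq_apply_le hA hv ht.le]

theorem stmt_6 {H : Type*} [NormedAddCommGroup H] [InnerProductSpace ℝ H] [CompleteSpace H]
    (A : H →L[ℝ] H)
    (hA_sa : ∀ x y : H, ⟪A x, y⟫ = ⟪x, A y⟫)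
    (hA_nn : ∀ x : H, 0 ≤ ⟪A x, x⟫)
    (v : ℝ → H)
    (hv : ∀ t ≥ (0:ℝ), HasDerivAt v (-(A (v t))) t) :
    ∀ t > (0:ℝ), ‖A (v t)‖ ^ 2 ≤ ‖v 0‖ ^ 2 / (2 * t ^ 2) :=
  stmt_6_general A hA_sa hA_nn v hv
end

section
/- Let H be a real Hilbert space, A : H → H a continuous self-adjoint nonnegative linear operator, and v : [0,∞) → H continuously differentiable with v'(t) = -A v(t) for all t ≥ 0, with v(0) = u₀ and A^{1/2}u₀ ≠ 0. Assume A^{1/2}v(t) ≠ 0 for all t ≥ 0. Then the Rayleigh-type quotient P(t) := |A v(t)|² / |A^{1/2} v(t)|² is nonincreasing on [0,∞). -/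
open scoped RealInnerProductSpace

/-! Along `v' = -A v` one has `(‖A v‖²)' = -2 ⟪A² v, A v⟫` and `⟪A v, v⟫' = -2 ‖A v‖²`, so the
quotient rule makes the sign of `P'` that of `‖A v‖⁴ - ⟪A² v, A v⟫ ⟪A v, v⟫`. Since
`‖A v‖² = ⟪A (A v), v⟫`, this is nonpositive by the Cauchy–Schwarz inequality for the
positive semidefinite form `⟪A ·, ·⟫`, applied to `A v` and `v`. -/

section

variable {H : Type*} [NormedAddCommGroup H] [InnerProductSpace ℝ H] {A : H →L[ℝ] H}

theorem inner_map_mul_inner_map_le (hA : ∀ x, 0 ≤ ⟪A x, x⟫) (x y : H) :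
    ⟪A x, y⟫ * ⟪A y, x⟫ ≤ ⟪A x, x⟫ * ⟪A y, y⟫ :=
  LinearMap.BilinForm.apply_mul_apply_le_of_forall_zero_le ((innerₗ H).comp (A : H →ₗ[ℝ] H))
    hA x y

theorem sq_norm_map_sq_le_inner_mul_inner (hA_sym : (A : H →ₗ[ℝ] H).IsSymmetric)
    (hA : ∀ x, 0 ≤ ⟪A x, x⟫) (w : H) : (‖A w‖ ^ 2) ^ 2 ≤ ⟪A (A w), A w⟫ * ⟪A w, w⟫ := by
  have hsq : ⟪A (A w), w⟫ = ‖A w‖ ^ 2 := by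
    rw [← real_inner_self_eq_norm_sq]; exact hA_sym (A w) w
  simpa only [sq, hsq, real_inner_self_eq_norm_sq] using inner_map_mul_inner_map_le hA (A w) w

variable {v : ℝ → H} {t : ℝ}

theorem HasDerivAt.norm_map_sq (hv : HasDerivAt v (-A (v t)) t) :
    HasDerivAt (fun s ↦ ‖A (v s)‖ ^ 2) (-2 * ⟪A (A (v t)), A (v t)⟫) t := by
  simpa [real_inner_comm] using (A.hasFDerivAt.comp_hasDerivAt t hv).norm_sq

theorem HasDerivAt.inner_map_self (hA_sym : (A : H →ₗ[ℝ] H).IsSymmetric)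
    (hv : HasDerivAt v (-A (v t)) t) :
    HasDerivAt (fun s ↦ ⟪A (v s), v s⟫) (-2 * ‖A (v t)‖ ^ 2) t := by
  refine ((A.hasFDerivAt.comp_hasDerivAt t hv).inner ℝ hv).congr_deriv ?_
  have hsym : ⟪A (A (v t)), v t⟫ = ⟪A (v t), A (v t)⟫ := hA_sym (A (v t)) (v t)
  rw [map_neg, inner_neg_left, inner_neg_right, Function.comp_apply, hsym,
    real_inner_self_eq_norm_sq]
  ring

theorem HasDerivAt.rayleigh_quotient (hA_sym : (A : H →ₗ[ℝ] H).IsSymmetric)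
    (hv : HasDerivAt v (-A (v t)) t) (hD : ⟪A (v t), v t⟫ ≠ 0) :
    HasDerivAt (fun s ↦ ‖A (v s)‖ ^ 2 / ⟪A (v s), v s⟫)
      (-2 * (⟪A (A (v t)), A (v t)⟫ * ⟪A (v t), v t⟫ - (‖A (v t)‖ ^ 2) ^ 2) /
        ⟪A (v t), v t⟫ ^ 2) t := by
  refine (hv.norm_map_sq.div (hv.inner_map_self hA_sym) hD).congr_deriv ?_
  ring

end

theorem stmt_8_general {H : Type*} [NormedAddCommGroup H] [InnerProductSpace ℝ H]
    (A : H →L[ℝ] H)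
    (hA_sa : ∀ x y : H, ⟪A x, y⟫ = ⟪x, A y⟫)
    (hA_nn : ∀ x : H, 0 ≤ ⟪A x, x⟫)
    (v : ℝ → H)
    (hv : ∀ t ≥ (0:ℝ), HasDerivAt v (-(A (v t))) t)
    (hnz : ∀ t ≥ (0:ℝ), ⟪A (v t), v t⟫ ≠ 0) :
    AntitoneOn (fun t => ‖A (v t)‖ ^ 2 / ⟪A (v t), v t⟫) (Set.Ici (0:ℝ)) := by
  have hP (t : ℝ) (ht : 0 ≤ t) := (hv t ht).rayleigh_quotient hA_sa (hnz t ht)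
  refine antitoneOn_of_hasDerivWithinAt_nonpos (convex_Ici 0)
    (fun t ht ↦ (hP t ht).continuousAt.continuousWithinAt)
    (fun t ht ↦ (hP t (interior_subset ht : 0 ≤ t)).hasDerivWithinAt) fun t _ ↦ ?_
  have hCS := sq_norm_map_sq_le_inner_mul_inner hA_sa hA_nn (v t)
  exact div_nonpos_of_nonpos_of_nonneg (by linarith) (sq_nonneg _)

theorem stmt_8 {H : Type*} [NormedAddCommGroup H] [InnerProductSpace ℝ H] [CompleteSpace H]
    (A : H →L[ℝ] H)
    (hA_sa : ∀ x y : H, ⟪A x, y⟫ = ⟪x, A y⟫)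
    (hA_nn : ∀ x : H, 0 ≤ ⟪A x, x⟫)
    (v : ℝ → H) (u₀ : H)
    (hv : ∀ t ≥ (0:ℝ), HasDerivAt v (-(A (v t))) t)
    (hv'' : ∀ t ≥ (0:ℝ), HasDerivAt (fun t => -(A (v t))) (A (A (v t))) t)
    (hv0 : v 0 = u₀)
    (hu₀ : ⟪A u₀, u₀⟫ ≠ 0)
    (hnz : ∀ t ≥ (0:ℝ), ⟪A (v t), v t⟫ ≠ 0) :
    AntitoneOn (fun t => ‖A (v t)‖ ^ 2 / ⟪A (v t), v t⟫) (Set.Ici (0:ℝ)) :=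
  stmt_8_general A hA_sa hA_nn v hv hnz
end

section
/- Let H be a real Hilbert space, A : H → H a continuous self-adjoint nonnegative linear operator, m : [0,∞) → [0,∞) continuous, and b : [0,∞) → (0,∞) continuous. Let v : [0,∞) → H be continuously differentiable with v'(s) = -A v(s) for all s ≥ 0, and let α : [0,∞) → [0,∞) be continuously differentiable with α(0) = 0 and b(t) α'(t) = m(|A^{1/2} v(α(t))|²) for all t ≥ 0. Then u(t) := v(α(t)) is continuously differentiable, u(0) = v(0), and b(t) u'(t) + m(|A^{1/2}u(t)|²) A u(t) = 0 for all t ≥ 0. -/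
/-!
`u = v ∘ α` is differentiable by the chain rule, with `u' t = α' t • (-A (v (α t)))`.
Multiplying by `b t` turns the speed `α' t` of the reparametrization into the Kirchhoff
coefficient `m ⟪A u, u⟫`, which is exactly the parabolic Kirchhoff equation for `u`.
-/

open scoped RealInnerProductSpace

section LinearFlow

variable {E : Type*} [NormedAddCommGroup E] [NormedSpace ℝ E]
  (A : E →L[ℝ] E) {v : ℝ → E} {α α' : ℝ → ℝ}

def reparamVelocity (v : ℝ → E) (α α' : ℝ → ℝ) (t : ℝ) : E :=
  α' t • -A (v (α t))

theorem hasDerivAt_comp_reparam (hv : ∀ s ≥ (0 : ℝ), HasDerivAt v (-A (v s)) s) {t : ℝ}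
    (hα : HasDerivAt α (α' t) t) (hαt : 0 ≤ α t) :
    HasDerivAt (fun t => v (α t)) (reparamVelocity A v α α' t) t :=
  (hv (α t) hαt).scomp t hα

theorem continuousOn_reparamVelocity (hv : ∀ s ≥ (0 : ℝ), HasDerivAt v (-A (v s)) s)
    (hα : ∀ t ≥ (0 : ℝ), HasDerivAt α (α' t) t) (hα'cont : ContinuousOn α' (Set.Ici 0))
    (hαnn : ∀ t ≥ (0 : ℝ), 0 ≤ α t) :
    ContinuousOn (reparamVelocity A v α α') (Set.Ici 0) := by
  have hvα : ContinuousOn (fun t => v (α t)) (Set.Ici 0) :=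
    HasDerivAt.continuousOn fun t ht => hasDerivAt_comp_reparam A hv (hα t ht) (hαnn t ht)
  exact hα'cont.smul (A.continuous.comp_continuousOn hvα).neg

theorem smul_reparamVelocity_add {t c β : ℝ} (hc : β * α' t = c) :
    β • reparamVelocity A v α α' t + c • A (v (α t)) = 0 := by
  rw [reparamVelocity, smul_smul, hc, smul_neg, neg_add_cancel]

end LinearFlow

theorem stmt_10_general {H : Type*} [NormedAddCommGroup H] [InnerProductSpace ℝ H]
    (A : H →L[ℝ] H)
    (m : ℝ → ℝ)
    (b : ℝ → ℝ)
    (v : ℝ → H)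
    (hv : ∀ s ≥ (0:ℝ), HasDerivAt v (-(A (v s))) s)
    (α α' : ℝ → ℝ)
    (hα : ∀ t ≥ (0:ℝ), HasDerivAt α (α' t) t)
    (hα'cont : ContinuousOn α' (Set.Ici (0:ℝ)))
    (hα0 : α 0 = 0)
    (hαnn : ∀ t ≥ (0:ℝ), 0 ≤ α t)
    (hαeq : ∀ t ≥ (0:ℝ), b t * α' t = m (⟪A (v (α t)), v (α t)⟫)) :
    ∃ u' : ℝ → H,
      (∀ t ≥ (0:ℝ), HasDerivAt (fun t => v (α t)) (u' t) t) ∧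
      ContinuousOn u' (Set.Ici (0:ℝ)) ∧
      v (α 0) = v 0 ∧
      (∀ t ≥ (0:ℝ),
        b t • u' t + m (⟪A (v (α t)), v (α t)⟫) • A (v (α t)) = 0) :=
  ⟨reparamVelocity A v α α',
    fun t ht => hasDerivAt_comp_reparam A hv (hα t ht) (hαnn t ht),
    continuousOn_reparamVelocity A hv hα hα'cont hαnn,
    by rw [hα0],
    fun t ht => smul_reparamVelocity_add A (hαeq t ht)⟩

theorem stmt_10 {H : Type*} [NormedAddCommGroup H] [InnerProductSpace ℝ H] [CompleteSpace H]
    (A : H →L[ℝ] H)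
    (hA_sa : ∀ x y : H, ⟪A x, y⟫ = ⟪x, A y⟫)
    (hA_nn : ∀ x : H, 0 ≤ ⟪A x, x⟫)
    (m : ℝ → ℝ) (hm_cont : ContinuousOn m (Set.Ici (0:ℝ)))
    (hm_nn : ∀ σ ≥ (0:ℝ), 0 ≤ m σ)
    (b : ℝ → ℝ) (hb_cont : ContinuousOn b (Set.Ici (0:ℝ)))
    (hb_pos : ∀ t ≥ (0:ℝ), 0 < b t)
    (v : ℝ → H)
    (hv : ∀ s ≥ (0:ℝ), HasDerivAt v (-(A (v s))) s)
    (α α' : ℝ → ℝ)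
    (hα : ∀ t ≥ (0:ℝ), HasDerivAt α (α' t) t)
    (hα'cont : ContinuousOn α' (Set.Ici (0:ℝ)))
    (hα0 : α 0 = 0)
    (hαnn : ∀ t ≥ (0:ℝ), 0 ≤ α t)
    (hαeq : ∀ t ≥ (0:ℝ), b t * α' t = m (⟪A (v (α t)), v (α t)⟫)) :
    ∃ u' : ℝ → H,
      (∀ t ≥ (0:ℝ), HasDerivAt (fun t => v (α t)) (u' t) t) ∧
      ContinuousOn u' (Set.Ici (0:ℝ)) ∧
      v (α 0) = v 0 ∧
      (∀ t ≥ (0:ℝ),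
        b t • u' t + m (⟪A (v (α t)), v (α t)⟫) • A (v (α t)) = 0) :=
  stmt_10_general A m b v hv α α' hα hα'cont hα0 hαnn hαeq
end
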